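/- arXiv:1307.1935 — 2 statements merged into one kernel-verified Lean document; each statement's English description precedes it below -/
import Mathlib

section
/- A metric space X is coarsely embeddable into Hilbert space if and only if for every R > 0 and ε > 0 there exists a map β : X → H into a Hilbert space with ‖β(x)‖ = 1 for all x, such that (1) sup{|1 − ⟨β(x), β(y)⟩| : d(x,y) ≤ R} ≤ ε, and (2) lim_{S→∞} sup{|⟨β(x), β(y)⟩| : d(x,y) ≥ S} = 0. -/
open Metric Filter
noncomputable section

/-- Uniformly discrete metric space. -/
def UniformlyDiscrete (X : Type*) [MetricSpace X] : Prop :=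
  ∃ c > (0:ℝ), ∀ x y : X, x ≠ y → c ≤ dist x y

/-- Bounded geometry: uniformly finite balls. -/
def BoundedGeometry (X : Type*) [MetricSpace X] : Prop :=
  ∀ r : ℝ, ∃ N : ℕ, ∀ x : X,
    (Metric.closedBall x r).Finite ∧ (Metric.closedBall x r).ncard ≤ N

/-- A coarse embedding of `X` into the Hilbert space `H`: there are nondecreasing
functions `ρ₋, ρ₊` tending to infinity controlling `‖φ x - φ y‖` by `dist x y`. -/
def IsCoarseEmbedding {X : Type*} [MetricSpace X] {H : Type*} [NormedAddCommGroup H]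
    (φ : X → H) : Prop :=
  ∃ ρm ρp : ℝ → ℝ, Monotone ρm ∧ Monotone ρp ∧
    Tendsto ρm atTop atTop ∧ Tendsto ρp atTop atTop ∧
    ∀ x y : X, ρm (dist x y) ≤ ‖φ x - φ y‖ ∧ ‖φ x - φ y‖ ≤ ρp (dist x y)

/-- `X` is coarsely embeddable into a Hilbert space. -/
def CoarselyEmbeddable (X : Type*) [MetricSpace X] : Prop :=
  ∃ (H : Type) (nH : NormedAddCommGroup H)
    (_ : @InnerProductSpace ℝ H _ nH.toSeminormedAddCommGroup) (φ : X → H),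
    @IsCoarseEmbedding X _ H nH φ

/-- The conditions on a unit-norm map `β : X → H` in the Dadarlat–Guentner
characterization of coarse embeddability: (1) `|1 - ⟨β x, β y⟩| ≤ ε` whenever
`dist x y ≤ R`; (2) `sup {|⟨β x, β y⟩| : dist x y ≥ S} → 0` as `S → ∞`. -/
def CEWitness {X : Type*} [MetricSpace X] {H : Type*} [NormedAddCommGroup H]
    [InnerProductSpace ℝ H] (β : X → H) (R ε : ℝ) : Prop :=
  (∀ x : X, ‖β x‖ = 1) ∧
  (∀ x y : X, dist x y ≤ R → |1 - (inner ℝ (β x) (β y) : ℝ)| ≤ ε) ∧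
  (∀ δ > (0:ℝ), ∃ S : ℝ, ∀ x y : X, S ≤ dist x y → |(inner ℝ (β x) (β y) : ℝ)| ≤ δ)

/-!
If `φ` is a coarse embedding, the Gaussian kernel `exp (-t ‖φ x - φ y‖²)` is positive semidefinite
(Schoenberg: up to a rank-one Hadamard factor it is the entrywise exponential of a Gram matrix), so
by Moore's theorem it equals `⟪β x, β y⟫` for unit vectors `β x`. A small `t` makes it close to `1`
at distance `≤ R`, and it decays at large distances because `‖φ x - φ y‖ ≥ ρ₋ (dist x y)`.

Conversely, take witnesses `βₙ` for `R = n + 1`, `ε = 2⁻⁽ⁿ⁺¹⁾` and thresholds `Sₙ` beyond which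
`⟪βₙ x, βₙ y⟫ ≤ 1/2`. Then `x ↦ (βₙ x - βₙ x₀)ₙ ∈ ℓ²` satisfies
`‖φ x - φ y‖² = ∑ₙ ‖βₙ x - βₙ y‖²`; each term is at most `4`, at most `2⁻ⁿ` once `dist x y ≤ n + 1`,
and at least `1` once `Sₙ ≤ dist x y`, so the sum lies between the number of such `n` and
`4 dist x y + 2`.
-/

open Matrix
open scoped InnerProductSpace ComplexOrder Topology

universe u

namespace Matrix

variable {n 𝕜 E : Type*} [RCLike 𝕜] [SeminormedAddCommGroup E] [InnerProductSpace 𝕜 E]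

/-- `Matrix.posSemidef_gram` without finiteness of the index type. -/
theorem posSemidef_gram' (v : n → E) : (gram 𝕜 v).PosSemidef := by
  refine ⟨isHermitian_gram 𝕜 v, fun c ↦ ?_⟩
  have h : ⟪c.sum fun i ci ↦ ci • v i, c.sum fun j cj ↦ cj • v j⟫_𝕜 =
      c.sum fun i ci ↦ c.sum fun j cj ↦ star ci * gram 𝕜 v i j * cj := by
    rw [Finsupp.sum_inner]
    refine Finsupp.sum_congr fun i _ ↦ ?_
    rw [Finsupp.inner_sum]
    refine Finsupp.sum_congr fun j _ ↦ ?_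
    rw [inner_smul_left, inner_smul_right, gram_apply, RCLike.star_def]
    ring
  rw [← h, inner_self_eq_norm_sq_to_K]
  positivity

theorem PosSemidef.map_pow {A : Matrix n n 𝕜} (hA : A.PosSemidef) (k : ℕ) :
    (A.map (· ^ k)).PosSemidef := by
  induction k with
  | zero =>
    convert posSemidef_gram' (𝕜 := 𝕜) (fun _ : n ↦ (1 : 𝕜)) using 1
    ext i j
    simp
  | succ k ih =>
    convert ih.hadamard hA using 1
    ext i j
    simp [pow_succ]

theorem PosSemidef.of_tendsto {ι : Type*} {l : Filter ι} [l.NeBot] {M : ι → Matrix n n ℝ}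
    {A : Matrix n n ℝ} (hM : ∀ k, (M k).PosSemidef)
    (hA : ∀ i j, Tendsto (fun k ↦ M k i j) l (𝓝 (A i j))) : A.PosSemidef := by
  refine ⟨?_, fun c ↦ ?_⟩
  · ext i j
    exact tendsto_nhds_unique ((hA j i).congr fun k ↦ (hM k).isHermitian.apply i j) (hA i j)
  · have hform := tendsto_finsetSum c.support fun i _ ↦ tendsto_finsetSum c.support fun j _ ↦
      ((hA i j).const_mul (star (c i))).mul_const (c j)
    exact ge_of_tendsto' hform fun k ↦ (hM k).2 c

/-- Schoenberg: `A.map exp` is the limit of the nonnegative combinations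
`∑ k < N, (k !)⁻¹ • A.map (· ^ k)` of Hadamard powers. -/
theorem PosSemidef.map_exp {A : Matrix n n ℝ} (hA : A.PosSemidef) :
    (A.map Real.exp).PosSemidef := by
  refine PosSemidef.of_tendsto (l := atTop)
    (M := fun N ↦ ∑ k ∈ Finset.range N, (k.factorial : ℝ)⁻¹ • A.map (· ^ k))
    (fun N ↦ posSemidef_sum _ fun k _ ↦ (hA.map_pow k).smul (by positivity)) fun i j ↦ ?_
  simpa [Matrix.sum_apply, Real.exp_eq_exp_ℝ, div_eq_inv_mul] using
    (NormedSpace.expSeries_div_hasSum_exp (A i j)).tendsto_sum_nat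

theorem posSemidef_gaussian {X H : Type*} [SeminormedAddCommGroup H] [InnerProductSpace ℝ H]
    (u : X → H) {t : ℝ} (ht : 0 ≤ t) :
    (of fun x y ↦ Real.exp (-t * ‖u x - u y‖ ^ 2)).PosSemidef := by
  have hexp := ((posSemidef_gram' (𝕜 := ℝ) u).smul (by positivity : 0 ≤ 2 * t)).map_exp
  have hdiag := posSemidef_gram' (𝕜 := ℝ) fun x ↦ Real.exp (-t * ‖u x‖ ^ 2)
  have h : (of fun x y ↦ Real.exp (-t * ‖u x - u y‖ ^ 2)) =
      ((2 * t) • gram ℝ u).map Real.exp ⊙ gram ℝ fun x ↦ Real.exp (-t * ‖u x‖ ^ 2) := by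
    ext x y
    simp only [of_apply, hadamard_apply, map_apply, smul_apply, gram_apply, smul_eq_mul,
      RCLike.inner_apply, conj_trivial, norm_sub_sq_real, ← Real.exp_add]
    congr 1
    ring
  rw [h]
  exact hexp.hadamard hdiag

end Matrix

/-- Moore's theorem: `β x` is the kernel function at `x` of the reproducing kernel Hilbert space
of `K`, viewed as a kernel with values in `ℝ →L[ℝ] ℝ`. -/
theorem exists_inner_eq_of_posSemidef {X : Type u} {K : Matrix X X ℝ} (hK : K.PosSemidef) :
    ∃ (H : Type u) (_ : NormedAddCommGroup H) (_ : InnerProductSpace ℝ H) (β : X → H),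
      ∀ x y, ⟪β x, β y⟫_ℝ = K x y := by
  set K' : Matrix X X (ℝ →L[ℝ] ℝ) := K.map fun a ↦ a • ContinuousLinearMap.id ℝ ℝ
  have hK' : K'.PosSemidef := by
    have htfae := (RKHS.posSemidef_tfae (K := K')).out 0 2
    rw [htfae]
    refine ⟨hK.isHermitian.map _ fun a ↦ ?_, fun c ↦ ?_⟩
    · simp [ContinuousLinearMap.star_eq_adjoint, ContinuousLinearMap.adjoint_id]
    · rw [Finsupp.sum_comm]
      simpa [K', RCLike.inner_apply, mul_comm, mul_left_comm] using hK.2 c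
  have : Fact K'.PosSemidef := ⟨hK'⟩
  refine ⟨RKHS.OfKernel K', inferInstance, inferInstance, fun x ↦ RKHS.kerFun _ x 1,
    fun x y ↦ ?_⟩
  rw [← RKHS.kernel_inner, RKHS.OfKernel.kernel_ofKernel]
  simpa [K'] using hK.isHermitian.apply x y

theorem abs_one_sub_exp_neg_le {a : ℝ} (ha : 0 ≤ a) : |1 - Real.exp (-a)| ≤ a := by
  rw [abs_of_nonneg (sub_nonneg.2 (Real.exp_le_one_iff.2 (neg_nonpos.2 ha)))]
  linarith [Real.add_one_le_exp (-a)]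

theorem IsCoarseEmbedding.exists_CEWitness {X : Type u} [MetricSpace X] {H : Type*}
    [NormedAddCommGroup H] [InnerProductSpace ℝ H] {φ : X → H} (hφ : IsCoarseEmbedding φ)
    (R : ℝ) {ε : ℝ} (hε : 0 < ε) :
    ∃ (H' : Type u) (_ : NormedAddCommGroup H') (_ : InnerProductSpace ℝ H') (β : X → H'),
      CEWitness β R ε := by
  obtain ⟨ρm, ρp, hρm, hρp, hρm_top, -, hφ⟩ := hφ
  set t := ε / (ρp R ^ 2 + 1)
  have ht : 0 < t := by positivity
  obtain ⟨H', _, _, β, hβ⟩ := exists_inner_eq_of_posSemidef (posSemidef_gaussian φ ht.le)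
  simp only [of_apply] at hβ
  refine ⟨H', inferInstance, inferInstance, β, fun x ↦ ?_, fun x y hxy ↦ ?_, fun δ hδ ↦ ?_⟩
  · have h := hβ x x
    rw [sub_self, norm_zero, real_inner_self_eq_norm_sq] at h
    simpa [pow_eq_one_iff_of_nonneg (norm_nonneg (β x)) two_ne_zero] using h
  · have hle : ‖φ x - φ y‖ ^ 2 ≤ ρp R ^ 2 :=
      pow_le_pow_left₀ (norm_nonneg _) ((hφ x y).2.trans (hρp hxy)) 2
    rw [hβ, neg_mul]
    calc |1 - Real.exp (-(t * ‖φ x - φ y‖ ^ 2))| ≤ t * ‖φ x - φ y‖ ^ 2 :=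
          abs_one_sub_exp_neg_le (by positivity)
      _ ≤ t * (ρp R ^ 2 + 1) := by gcongr; linarith
      _ = ε := div_mul_cancel₀ _ (by positivity)
  · have hdecay : Tendsto (fun r ↦ Real.exp (-t * ρm r ^ 2)) atTop (𝓝 0) := by
      refine Real.tendsto_exp_atBot.comp ?_
      simpa [neg_mul, Function.comp_def] using tendsto_neg_atTop_atBot.comp
        (((tendsto_pow_atTop two_ne_zero).comp hρm_top).const_mul_atTop ht)
    obtain ⟨S, hS0, hSδ⟩ :=
      ((hρm_top.eventually_ge_atTop 0).and (hdecay.eventually_lt_const hδ)).exists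
    refine ⟨S, fun x y hxy ↦ ?_⟩
    have hle : ρm S ^ 2 ≤ ‖φ x - φ y‖ ^ 2 :=
      pow_le_pow_left₀ hS0 ((hρm hxy).trans (hφ x y).1) 2
    rw [hβ, abs_of_nonneg (Real.exp_pos _).le]
    refine le_trans (Real.exp_le_exp.2 ?_) hSδ.le
    nlinarith

namespace CEWitness

variable {X H : Type*} [MetricSpace X] [NormedAddCommGroup H] [InnerProductSpace ℝ H]
  {β : X → H} {R ε : ℝ}

theorem norm_sub_sq_eq (hβ : CEWitness β R ε) (x y : X) :
    ‖β x - β y‖ ^ 2 = 2 - 2 * ⟪β x, β y⟫_ℝ := by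
  rw [norm_sub_sq_real, hβ.1, hβ.1]
  ring

theorem norm_sub_sq_le_four (hβ : CEWitness β R ε) (x y : X) : ‖β x - β y‖ ^ 2 ≤ 4 := by
  have h : ‖β x - β y‖ ≤ 2 := by
    simpa [hβ.1, one_add_one_eq_two] using norm_sub_le (β x) (β y)
  nlinarith [norm_nonneg (β x - β y)]

theorem norm_sub_sq_le (hβ : CEWitness β R ε) {x y : X} (hxy : dist x y ≤ R) :
    ‖β x - β y‖ ^ 2 ≤ 2 * ε := by
  rw [hβ.norm_sub_sq_eq]
  linarith [(abs_le.1 (hβ.2.1 x y hxy)).2]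

theorem exists_one_le_norm_sub_sq (hβ : CEWitness β R ε) :
    ∃ S : ℝ, ∀ x y, S ≤ dist x y → 1 ≤ ‖β x - β y‖ ^ 2 := by
  obtain ⟨S, hS⟩ := hβ.2.2 (1 / 2) (by norm_num)
  refine ⟨S, fun x y hxy ↦ ?_⟩
  rw [hβ.norm_sub_sq_eq]
  linarith [(abs_le.1 (hS x y hxy)).2]

end CEWitness

theorem summable_and_tsum_le_of_tail_le_geometric {a : ℕ → ℝ} {N : ℕ} (h0 : ∀ n, 0 ≤ a n)
    (h4 : ∀ n, a n ≤ 4) (htail : ∀ n ≥ N, a n ≤ (1 / 2) ^ n) :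
    Summable a ∧ ∑' n, a n ≤ 4 * N + 2 := by
  have ha : Summable a := Summable.of_norm_bounded_eventually_nat summable_geometric_two
    (eventually_atTop.2 ⟨N, fun n hn ↦ (Real.norm_of_nonneg (h0 n)).trans_le (htail n hn)⟩)
  refine ⟨ha, ?_⟩
  have hhead : ∑ n ∈ Finset.range N, a n ≤ 4 * N := by
    simpa [mul_comm] using Finset.sum_le_sum fun n (_ : n ∈ Finset.range N) ↦ h4 n
  have htail' : ∑' n, a (n + N) ≤ 2 := by
    rw [← tsum_geometric_two]
    refine Summable.tsum_le_tsum (fun n ↦ ?_) ((summable_nat_add_iff N).2 ha)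
      summable_geometric_two
    exact (htail _ le_add_self).trans
      (pow_le_pow_of_le_one (by norm_num) (by norm_num) le_self_add)
  rw [← ha.sum_add_tsum_nat_add N]
  linarith

/-- Counting only `n < ⌊r⌋₊` keeps the count finite and monotone in `r`. -/
def countLE (S : ℕ → ℝ) (r : ℝ) : ℕ := ((Finset.range ⌊r⌋₊).filter (S · ≤ r)).card

theorem monotone_countLE (S : ℕ → ℝ) : Monotone (countLE S) := fun r r' hr ↦
  Finset.card_le_card fun n ↦ by
    simp only [Finset.mem_filter, Finset.mem_range]
    exact fun ⟨hn, hSn⟩ ↦ ⟨hn.trans_le (Nat.floor_le_floor hr), hSn.trans hr⟩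

theorem tendsto_countLE_atTop (S : ℕ → ℝ) : Tendsto (countLE S) atTop atTop := by
  refine tendsto_atTop.2 fun m ↦ ?_
  filter_upwards [eventually_ge_atTop (m : ℝ),
    (Finset.range m).eventually_all.2 fun n _ ↦ eventually_ge_atTop (S n)] with r hm hS
  calc m = (Finset.range m).card := (Finset.card_range m).symm
    _ ≤ countLE S r := Finset.card_le_card fun n hn ↦ by
      simp only [Finset.mem_filter, Finset.mem_range] at hn ⊢
      exact ⟨hn.trans_le (Nat.le_floor hm), hS n (Finset.mem_range.2 hn)⟩

theorem lp.exists_norm_sub_sq_eq_tsum {ι X : Type*} {E : ι → Type*}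
    [∀ i, NormedAddCommGroup (E i)] (β : ∀ i, X → E i) (x₀ : X)
    (hβ : ∀ x y, Summable fun i ↦ ‖β i x - β i y‖ ^ 2) :
    ∃ φ : X → lp E 2, ∀ x y, ‖φ x - φ y‖ ^ 2 = ∑' i, ‖β i x - β i y‖ ^ 2 := by
  have hrpow : ∀ {a : ℝ}, a ^ (2 : ENNReal).toReal = a ^ 2 := by
    simp only [ENNReal.toReal_ofNat, Real.rpow_two, forall_const]
  have hmem : ∀ x, Memℓp (fun i ↦ β i x - β i x₀) 2 := fun x ↦
    memℓp_gen (by simpa only [hrpow] using hβ x x₀)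
  refine ⟨fun x ↦ ⟨_, hmem x⟩, fun x y ↦ ?_⟩
  have h := lp.norm_rpow_eq_tsum (p := 2) (by norm_num) (⟨_, hmem x⟩ - ⟨_, hmem y⟩)
  simpa only [hrpow, lp.coeFn_sub, Pi.sub_apply, sub_sub_sub_cancel_right] using h

theorem IsCoarseEmbedding.of_sq_bounds {X H : Type*} [MetricSpace X] [NormedAddCommGroup H]
    {φ : X → H} {f g : ℝ → ℝ} (hf : Monotone f) (hg : Monotone g)
    (hf_top : Tendsto f atTop atTop) (hg_top : Tendsto g atTop atTop)
    (hφ : ∀ x y, f (dist x y) ≤ ‖φ x - φ y‖ ^ 2 ∧ ‖φ x - φ y‖ ^ 2 ≤ g (dist x y)) :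
    IsCoarseEmbedding φ := by
  refine ⟨fun r ↦ √(f r), fun r ↦ √(g r), fun r s h ↦ Real.sqrt_le_sqrt (hf h),
    fun r s h ↦ Real.sqrt_le_sqrt (hg h), Real.tendsto_sqrt_atTop.comp hf_top,
    Real.tendsto_sqrt_atTop.comp hg_top, fun x y ↦ ?_⟩
  rw [← Real.sqrt_sq (norm_nonneg (φ x - φ y))]
  exact ⟨Real.sqrt_le_sqrt (hφ x y).1, Real.sqrt_le_sqrt (hφ x y).2⟩

theorem coarselyEmbeddable_of_forall_CEWitness {X : Type*} [MetricSpace X]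
    (h : ∀ R > (0 : ℝ), ∀ ε > (0 : ℝ),
      ∃ (H : Type) (_ : NormedAddCommGroup H) (_ : InnerProductSpace ℝ H) (β : X → H),
        CEWitness β R ε) :
    CoarselyEmbeddable X := by
  rcases isEmpty_or_nonempty X with hX | ⟨⟨x₀⟩⟩
  · exact ⟨ℝ, inferInstance, inferInstance, fun _ ↦ 0, id, id, monotone_id, monotone_id,
      tendsto_id, tendsto_id, hX.elim⟩
  choose H _ _ β hβ using fun n : ℕ ↦ h (n + 1) (by positivity) ((1 / 2) ^ (n + 1)) (by positivity)
  choose S hS using fun n ↦ (hβ n).exists_one_le_norm_sub_sq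
  have hsum : ∀ x y, Summable (fun n ↦ ‖β n x - β n y‖ ^ 2) ∧
      ∑' n, ‖β n x - β n y‖ ^ 2 ≤ 4 * ⌊dist x y⌋₊ + 2 := fun x y ↦
    summable_and_tsum_le_of_tail_le_geometric (fun n ↦ by positivity)
      (fun n ↦ (hβ n).norm_sub_sq_le_four x y) fun n hn ↦ by
        have hd : dist x y ≤ n + 1 :=
          (Nat.lt_floor_add_one _).le.trans (by exact_mod_cast Nat.add_le_add_right hn 1)
        exact ((hβ n).norm_sub_sq_le hd).trans_eq (by ring)
  obtain ⟨φ, hφ⟩ := lp.exists_norm_sub_sq_eq_tsum β x₀ fun x y ↦ (hsum x y).1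
  refine ⟨_, inferInstance, inferInstance, φ, IsCoarseEmbedding.of_sq_bounds
    (f := fun r ↦ countLE S r) (g := fun r ↦ 4 * r + 2)
    (Nat.mono_cast.comp (monotone_countLE S)) (fun r s hrs ↦ by linarith)
    (tendsto_natCast_atTop_atTop.comp (tendsto_countLE_atTop S))
    (tendsto_atTop_add_const_right _ 2 (tendsto_id.const_mul_atTop four_pos)) fun x y ↦ ?_⟩
  rw [hφ]
  constructor
  · calc (countLE S (dist x y) : ℝ)
        = ∑ n ∈ (Finset.range ⌊dist x y⌋₊).filter (S · ≤ dist x y), (1 : ℝ) := by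
          simp [countLE]
      _ ≤ ∑ n ∈ (Finset.range ⌊dist x y⌋₊).filter (S · ≤ dist x y), ‖β n x - β n y‖ ^ 2 :=
          Finset.sum_le_sum fun n hn ↦ hS n x y (Finset.mem_filter.1 hn).2
      _ ≤ ∑' n, ‖β n x - β n y‖ ^ 2 :=
          (hsum x y).1.sum_le_tsum _ fun n _ ↦ by positivity
  · linarith [(hsum x y).2, Nat.floor_le (dist_nonneg (x := x) (y := y))]

theorem coarselyEmbeddable_iff_CEWitness_general (X : Type) [MetricSpace X] :
    CoarselyEmbeddable X ↔
      ∀ R > (0:ℝ), ∀ ε > (0:ℝ),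
        ∃ (H : Type) (nH : NormedAddCommGroup H)
          (iH : @InnerProductSpace ℝ H _ nH.toSeminormedAddCommGroup)
          (β : X → H), @CEWitness X _ H nH iH β R ε :=
  ⟨fun ⟨_, _, _, _, hφ⟩ R _ _ hε ↦ hφ.exists_CEWitness R hε,
    coarselyEmbeddable_of_forall_CEWitness⟩

/-- Dadarlat–Guentner characterization of coarse embeddability. -/
theorem coarselyEmbeddable_iff_CEWitness (X : Type) [MetricSpace X]
    (hud : UniformlyDiscrete X) (hbg : BoundedGeometry X) :
    CoarselyEmbeddable X ↔
      ∀ R > (0:ℝ), ∀ ε > (0:ℝ),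
        ∃ (H : Type) (nH : NormedAddCommGroup H)
          (iH : @InnerProductSpace ℝ H _ nH.toSeminormedAddCommGroup)
          (β : X → H), @CEWitness X _ H nH iH β R ε :=
  coarselyEmbeddable_iff_CEWitness_general X
end
end

section
/- Let (X,d) be a metric space and {φ_i : X → Y_i}_{i=1}^n an exact family of maps. If the family of preimages {φ_i⁻¹(w) : w ∈ Y_i, i = 1,…,n} (each viewed as a metric subspace of X) is equi-exact, then X has property A. -/
/-!
Twist the exactness witness `ξ : X → ℓ²(⊔ᵢ Yᵢ)` by the equi-exactness witnesses `η_w` of the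
fibres: `α x w = ξ x w • η_w(z)`, with `z` a point of the fibre over `w` close to `x`. As `ξ x`
lives on fibres meeting a bounded neighbourhood of `x`, close points `x, y` evaluate `η_w` at
close points of the fibre, so `α x ≈ α y`; far apart points evaluate it at far apart points,
so `α x ⊥ α y`.
-/

open Metric Filter
noncomputable section

/-- The witness conditions for property A (Tu's characterization). -/
def PropertyAWitness {X : Type*} [MetricSpace X] {H : Type*} [NormedAddCommGroup H]
    [InnerProductSpace ℝ H] (α : X → H) (R ε S : ℝ) : Prop :=
  (∀ x : X, ‖α x‖ = 1) ∧
  (∀ x y : X, dist x y ≤ R → |1 - (inner ℝ (α x) (α y) : ℝ)| < ε) ∧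
  (∀ x y : X, S ≤ dist x y → (inner ℝ (α x) (α y) : ℝ) = 0)

/-- Property A (Tu's characterization, with a general Hilbert space). -/
def PropertyA (X : Type*) [MetricSpace X] : Prop :=
  ∀ R > (0:ℝ), ∀ ε > (0:ℝ),
    ∃ (H : Type) (nH : NormedAddCommGroup H)
      (iH : @InnerProductSpace ℝ H _ nH.toSeminormedAddCommGroup)
      (α : X → H) (S : ℝ), S > 0 ∧ @PropertyAWitness X _ H nH iH α R ε S

/-- An exact family of maps `φ i : X → Y i`: for all `R, ε > 0` there are `S > 0`
and a unit-norm map `ξ : X → ℓ²(⊔ᵢ Yᵢ)` which varies by at most `ε` over distance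
`R`, and with `supp ξ x ⊆ ∪ᵢ φᵢ(B_S(x))`. -/
def ExactFamily {X : Type*} [MetricSpace X] {n : ℕ} {Y : Fin n → Type*}
    (φ : ∀ i, X → Y i) : Prop :=
  ∀ R > (0:ℝ), ∀ ε > (0:ℝ), ∃ S : ℝ, S > 0 ∧
    ∃ ξ : X → lp (fun _ : (Σ i, Y i) => ℝ) 2,
      (∀ x : X, ‖ξ x‖ = 1) ∧
      (∀ x y : X, dist x y ≤ R → ‖ξ x - ξ y‖ ≤ ε) ∧
      (∀ (x : X) (w : Σ i, Y i), ξ x w ≠ 0 → ∃ z : X, dist x z < S ∧ φ w.1 z = w.2)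

/-- Witness conditions for equi-exactness of a family of subsets of `X`. -/
def EquiExactWitness {X : Type*} [MetricSpace X] {I : Type*} (A : I → Set X)
    (H : Type*) [NormedAddCommGroup H] [InnerProductSpace ℝ H]
    (ξ : ∀ j, A j → H) (R ε S : ℝ) : Prop :=
  (∀ (j : I) (x : A j), ‖ξ j x‖ = 1) ∧
  (∀ (j : I) (x y : A j), dist (x : X) (y : X) ≤ R → ‖ξ j x - ξ j y‖ ≤ ε) ∧
  (∀ (j : I) (x y : A j), S ≤ dist (x : X) (y : X) → (inner ℝ (ξ j x) (ξ j y) : ℝ) = 0)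

/-- A family of subsets of `X`, each with the induced metric, is equi-exact. -/
def EquiExact {X : Type*} [MetricSpace X] {I : Type*} (A : I → Set X) : Prop :=
  ∀ R > (0:ℝ), ∀ ε > (0:ℝ),
    ∃ (H : Type) (nH : NormedAddCommGroup H)
      (iH : @InnerProductSpace ℝ H _ nH.toSeminormedAddCommGroup)
      (ξ : ∀ j, A j → H) (S : ℝ), S > 0 ∧
      @EquiExactWitness X _ I A H nH iH ξ R ε S

open scoped ENNReal InnerProductSpace

theorem abs_one_sub_real_inner_of_norm_eq_one {E : Type*} [NormedAddCommGroup E]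
    [InnerProductSpace ℝ E] {x y : E} (hx : ‖x‖ = 1) (hy : ‖y‖ = 1) :
    |1 - ⟪x, y⟫_ℝ| = ‖x - y‖ ^ 2 / 2 := by
  have h : 1 - ⟪x, y⟫_ℝ = ‖x - y‖ ^ 2 / 2 := by
    rw [norm_sub_sq_real, hx, hy]
    ring
  rw [h, abs_of_nonneg (by positivity)]

namespace lp

section SMul

variable {W H : Type*} [NormedAddCommGroup H] [NormedSpace ℝ H] {p : ℝ≥0∞}

def smulOfNormLeOne (a : lp (fun _ : W => ℝ) p) (u : W → H) (hu : ∀ w, ‖u w‖ ≤ 1) :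
    lp (fun _ : W => H) p :=
  ⟨fun w => a w • u w, (lp.memℓp a).mono' fun w => by
    rw [norm_smul]
    exact mul_le_of_le_one_right (norm_nonneg _) (hu w)⟩

variable {a b : lp (fun _ : W => ℝ) p} {u v : W → H} {hu : ∀ w, ‖u w‖ ≤ 1}
  {hv : ∀ w, ‖v w‖ ≤ 1}

@[simp]
theorem smulOfNormLeOne_apply (w : W) : smulOfNormLeOne a u hu w = a w • u w :=
  rfl

theorem norm_smulOfNormLeOne_le (hp : p ≠ 0) : ‖smulOfNormLeOne a u hu‖ ≤ ‖a‖ :=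
  norm_mono hp fun w => by
    rw [smulOfNormLeOne_apply, norm_smul]
    exact mul_le_of_le_one_right (norm_nonneg _) (hu w)

theorem norm_smulOfNormLeOne (hp : p ≠ 0) (h : ∀ w, a w ≠ 0 → ‖u w‖ = 1) :
    ‖smulOfNormLeOne a u hu‖ = ‖a‖ :=
  (norm_smulOfNormLeOne_le hp).antisymm <| norm_mono hp fun w => by
    rw [smulOfNormLeOne_apply, norm_smul]
    by_cases hw : a w = 0
    · simp [hw]
    · rw [h w hw, mul_one]

theorem smulOfNormLeOne_sub_smulOfNormLeOne (a b : lp (fun _ : W => ℝ) p) :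
    smulOfNormLeOne a u hu - smulOfNormLeOne b u hu = smulOfNormLeOne (a - b) u hu :=
  ext <| funext fun w => (sub_smul (a w) (b w) (u w)).symm

theorem norm_smulOfNormLeOne_sub_le (hp : p ≠ 0) {δ : ℝ} (hδ : 0 ≤ δ)
    (h : ∀ w, a w ≠ 0 → ‖u w - v w‖ ≤ δ) :
    ‖smulOfNormLeOne a u hu - smulOfNormLeOne a v hv‖ ≤ δ * ‖a‖ :=
  calc ‖smulOfNormLeOne a u hu - smulOfNormLeOne a v hv‖
      ≤ ‖δ • a‖ := norm_mono hp fun w => by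
        rw [coeFn_sub, Pi.sub_apply, smulOfNormLeOne_apply, smulOfNormLeOne_apply, ← smul_sub,
          coeFn_smul, Pi.smul_apply, norm_smul, norm_smul, Real.norm_of_nonneg hδ, mul_comm δ]
        by_cases hw : a w = 0
        · simp [hw]
        · exact mul_le_mul_of_nonneg_left (h w hw) (norm_nonneg _)
    _ = δ * ‖a‖ := by rw [norm_const_smul hp, Real.norm_of_nonneg hδ]

theorem norm_smulOfNormLeOne_sub_smulOfNormLeOne_le [Fact (1 ≤ p)] {δ : ℝ} (hδ : 0 ≤ δ)
    (h : ∀ w, b w ≠ 0 → ‖u w - v w‖ ≤ δ) :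
    ‖smulOfNormLeOne a u hu - smulOfNormLeOne b v hv‖ ≤ ‖a - b‖ + δ * ‖b‖ :=
  have hp : p ≠ 0 := (zero_lt_one.trans_le Fact.out).ne'
  calc ‖smulOfNormLeOne a u hu - smulOfNormLeOne b v hv‖
      = ‖smulOfNormLeOne (a - b) u hu
          + (smulOfNormLeOne b u hu - smulOfNormLeOne b v hv)‖ := by
        rw [← smulOfNormLeOne_sub_smulOfNormLeOne]
        abel_nf
    _ ≤ ‖a - b‖ + δ * ‖b‖ := (norm_add_le _ _).trans <|
        add_le_add (norm_smulOfNormLeOne_le hp) (norm_smulOfNormLeOne_sub_le hp hδ h)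

end SMul

theorem inner_smulOfNormLeOne_eq_zero {W H : Type*} [NormedAddCommGroup H]
    [InnerProductSpace ℝ H] {a b : lp (fun _ : W => ℝ) 2} {u v : W → H}
    {hu : ∀ w, ‖u w‖ ≤ 1} {hv : ∀ w, ‖v w‖ ≤ 1}
    (h : ∀ w, a w ≠ 0 → b w ≠ 0 → ⟪u w, v w⟫_ℝ = 0) :
    ⟪smulOfNormLeOne a u hu, smulOfNormLeOne b v hv⟫_ℝ = 0 := by
  rw [lp.inner_eq_tsum]
  refine (tsum_congr fun w => ?_).trans tsum_zero
  rw [smulOfNormLeOne_apply, smulOfNormLeOne_apply, real_inner_smul_left,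
    real_inner_smul_right]
  by_cases ha : a w = 0
  · simp [ha]
  by_cases hb : b w = 0
  · simp [hb]
  simp [h w ha hb]

end lp

section NearbyValue

variable {X W H : Type*} [PseudoMetricSpace X] (A : W → Set X) (η : ∀ w, A w → H) (T : ℝ)

open Classical in
def nearbyValue [Zero H] (x : X) (w : W) : H :=
  if h : ∃ z, dist x z < T ∧ z ∈ A w then η w ⟨h.choose, h.choose_spec.2⟩ else 0

variable {A η T}

theorem exists_nearbyValue_eq [Zero H] {x : X} {w : W} (h : ∃ z, dist x z < T ∧ z ∈ A w) :
    ∃ z : A w, dist x z < T ∧ nearbyValue A η T x w = η w z :=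
  ⟨_, h.choose_spec.1, dif_pos h⟩

theorem norm_nearbyValue_le [NormedAddCommGroup H] (hη : ∀ w z, ‖η w z‖ = 1) (x : X)
    (w : W) : ‖nearbyValue A η T x w‖ ≤ 1 := by
  unfold nearbyValue
  split_ifs
  · exact (hη _ _).le
  · simp

end NearbyValue

theorem exists_propertyAWitness_of_equiExactWitness {X W H : Type*} [MetricSpace X]
    [NormedAddCommGroup H] [InnerProductSpace ℝ H] {A : W → Set X} {η : ∀ w, A w → H}
    {R ε S S' δ : ℝ} (hR : 0 ≤ R) (ξ : X → lp (fun _ : W => ℝ) 2) (hξ1 : ∀ x, ‖ξ x‖ = 1)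
    (hξR : ∀ x y, dist x y ≤ R → ‖ξ x - ξ y‖ ≤ δ)
    (hξS : ∀ x w, ξ x w ≠ 0 → ∃ z, dist x z < S ∧ z ∈ A w)
    (hη : EquiExactWitness A H η (2 * S + 3 * R) δ S') (hδε : 2 * δ ^ 2 < ε) :
    ∃ α : X → lp (fun _ : W => H) 2, PropertyAWitness α R ε (2 * (S + R) + S') := by
  obtain ⟨hη1, hηR, hηS'⟩ := hη
  -- Looking within `S + R` rather than `S` of `x` makes `u x` meaningful on the support of
  -- `ξ y` for every `y` within `R` of `x`.
  set u := nearbyValue A η (S + R)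
  have hu : ∀ x w, ‖u x w‖ ≤ 1 := norm_nearbyValue_le hη1
  have hu_eq : ∀ x y w, dist x y ≤ R → ξ y w ≠ 0 →
      ∃ z : A w, dist x z < S + R ∧ u x w = η w z :=
    fun x y w hxy hw => exists_nearbyValue_eq <| by
      obtain ⟨z, hyz, hz⟩ := hξS y w hw
      exact ⟨z, by linarith [dist_triangle x y z], hz⟩
  set α := fun x => lp.smulOfNormLeOne (ξ x) (u x) (hu x)
  have hα1 : ∀ x, ‖α x‖ = 1 := fun x => by
    refine (lp.norm_smulOfNormLeOne two_ne_zero fun w hw => ?_).trans (hξ1 x)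
    obtain ⟨z, -, hz⟩ := hu_eq x x w (by simpa using hR) hw
    rw [hz, hη1]
  refine ⟨α, hα1, fun x y hxy => ?_, fun x y hxy => ?_⟩
  · have hδ : 0 ≤ δ := (norm_nonneg _).trans (hξR x x (by simpa using hR))
    have hαxy : ‖α x - α y‖ ≤ 2 * δ :=
      calc ‖α x - α y‖ ≤ ‖ξ x - ξ y‖ + δ * ‖ξ y‖ :=
            lp.norm_smulOfNormLeOne_sub_smulOfNormLeOne_le hδ fun w hw => by
              obtain ⟨z, hxz, hz⟩ := hu_eq x y w hxy hw
              obtain ⟨z', hyz', hz'⟩ := hu_eq y y w (by simpa using hR) hw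
              rw [hz, hz']
              refine hηR w z z' ?_
              linarith [dist_triangle4 (z : X) x y z', dist_comm x (z : X)]
        _ ≤ 2 * δ := by rw [hξ1]; linarith [hξR x y hxy]
    rw [abs_one_sub_real_inner_of_norm_eq_one (hα1 x) (hα1 y)]
    nlinarith [norm_nonneg (α x - α y)]
  · refine lp.inner_smulOfNormLeOne_eq_zero fun w hx hy => ?_
    obtain ⟨z, hxz, hz⟩ := hu_eq x x w (by simpa using hR) hx
    obtain ⟨z', hyz', hz'⟩ := hu_eq y y w (by simpa using hR) hy
    rw [hz, hz']
    refine hηS' w z z' ?_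
    linarith [dist_triangle4 x (z : X) z' y, dist_comm (z' : X) y]

/-- If `{φ i}` is an exact family of maps and the preimages `φ i ⁻¹' {w}` form an
equi-exact family of metric subspaces, then `X` has property A. -/
theorem propertyA_of_exactFamily_of_equiExact (X : Type) [MetricSpace X]
    {n : ℕ} {Y : Fin n → Type} (φ : ∀ i, X → Y i)
    (hexact : ExactFamily φ)
    (hequi : EquiExact (fun p : Σ i, Y i => φ p.1 ⁻¹' {p.2})) :
    PropertyA X := by
  intro R hR ε hε
  have hδ : 0 < √ε / 2 := by positivity
  obtain ⟨S, hS, ξ, hξ1, hξR, hξS⟩ := hexact R hR _ hδ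
  obtain ⟨H, _, _, η, S', hS', hη⟩ := hequi (2 * S + 3 * R) (by positivity) _ hδ
  have hδε : 2 * (√ε / 2) ^ 2 < ε := by
    rw [div_pow, Real.sq_sqrt hε.le]
    linarith
  obtain ⟨α, hα⟩ := exists_propertyAWitness_of_equiExactWitness hR.le ξ hξ1 hξR hξS hη hδε
  exact ⟨_, _, _, α, _, by positivity, hα⟩

end
end
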